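/- For a locally path-connected metric space X, the following are equivalent: (1) the trivial subgroup of π₁(X) is open; (2) all subgroups of π₁(X,x) are open; (3) X is semi-locally simply connected. -/

import Mathlib

/-!
Since `q ↦ q ⬝ p⁻¹` is continuous on path spaces, openness of the trivial subgroup makes every
homotopy class of paths open, and `loopsIn G` is a union of homotopy classes. A sup-ball around the
constant loop at `z` inside `loopsIn ⊥` gives a neighbourhood of `z` whose loops are nullhomotopic.

Conversely, local path-connectedness upgrades semi-local simple connectivity to: every point
has an open neighbourhood in which any two paths with common endpoints are homotopic in `X`. Given a
path `p`, take a Lebesgue number `δ` of these neighbourhoods along `p` and subdivide `[0, 1]` so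
that `p` moves less than `δ / 4` on each piece. A path `q` uniformly close to `p` is joined to `p`
at the subdivision points by short paths `A k`, and each square `A k ⬝ q|ₖ ≃ p|ₖ ⬝ A (k + 1)` lies
in a single such neighbourhood; stacking the squares gives `q ≃ p`.
-/

open FundamentalGroup

attribute [local instance] Path.Homotopic.setoid

/-- The set of loops at `x` representing elements of the subgroup `G` of `π₁(X, x)`. -/
def loopsIn {X : Type} [TopologicalSpace X] {x : X} (G : Subgroup (FundamentalGroup X x)) :
    Set (Path x x) :=
  {p : Path x x |
    FundamentalGroup.fromPath (X := TopCat.of X) (⟦p⟧ : Path.Homotopic.Quotient x x) ∈ G}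

/-- `X` is semi-locally simply connected: every point has a neighborhood `U` such that
every loop based at that point with image in `U` is nullhomotopic in `X`. -/
def SemiLocallySimplyConnected (X : Type) [TopologicalSpace X] : Prop :=
  ∀ z : X, ∃ U ∈ nhds z, ∀ p : Path z z, Set.range p ⊆ U → p.Homotopic (Path.refl z)

open Set Topology Metric unitInterval

namespace Path

variable {X : Type*} [TopologicalSpace X] {x y : X}

theorem homotopic_iff_trans_symm_homotopic_refl {p q : Path x y} :
    p.Homotopic q ↔ (p.trans q.symm).Homotopic (Path.refl x) := by
  simp only [← Homotopic.Quotient.eq, Homotopic.Quotient.mk_trans, Homotopic.Quotient.mk_symm,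
    Homotopic.Quotient.mk_refl]
  refine ⟨fun h => by rw [h, Homotopic.Quotient.trans_symm], fun h => ?_⟩
  simpa using congrArg (Homotopic.Quotient.trans · (Homotopic.Quotient.mk q)) h

theorem Homotopic.of_trans_left {z : X} (c : Path z x) {p q : Path x y}
    (h : (c.trans p).Homotopic (c.trans q)) : p.Homotopic q := by
  simp only [← Homotopic.Quotient.eq, Homotopic.Quotient.mk_trans] at h ⊢
  simpa [← Homotopic.Quotient.trans_assoc] using
    congrArg ((Homotopic.Quotient.mk c).symm.trans ·) h

theorem Homotopic.of_cast {x' y' : X} {p q : Path x y} (hx : x' = x) (hy : y' = y)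
    (h : (p.cast hx hy).Homotopic (q.cast hx hy)) : p.Homotopic q := by
  subst hx hy
  exact h

theorem Homotopic.subpath_ladder {x' y' : X} {p : Path x y} {q : Path x' y'} (t : ℕ → I)
    (A : ∀ k, Path (p (t k)) (q (t k)))
    (h : ∀ k, ((A k).trans (q.subpath (t k) (t (k + 1)))).Homotopic
      ((p.subpath (t k) (t (k + 1))).trans (A (k + 1)))) (n : ℕ) :
    ((A 0).trans (q.subpath (t 0) (t n))).Homotopic ((p.subpath (t 0) (t n)).trans (A n)) := by
  induction n with
  | zero => simpa [subpath_self] using (trans_refl (A 0)).trans (refl_trans (A 0)).symm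
  | succ n ih =>
    have hq : Homotopic _ _ := ⟨Homotopy.subpathTransSubpath q (t 0) (t n) (t (n + 1))⟩
    have hp : Homotopic _ _ := ⟨Homotopy.subpathTransSubpath p (t 0) (t n) (t (n + 1))⟩
    simp only [← Homotopic.Quotient.eq, Homotopic.Quotient.mk_trans] at hp hq ih h ⊢
    rw [← hq, ← hp, ← Homotopic.Quotient.trans_assoc, ih, Homotopic.Quotient.trans_assoc, h,
      Homotopic.Quotient.trans_assoc]

theorem Homotopic.of_trans_subpath {p q : Path x y} {s u : I} (hs : s = 0) (hu : u = 1)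
    {B : Path (p s) (q s)} {C : Path (p u) (q u)}
    (hB : B.Homotopic ((Path.refl x).cast (hs ▸ p.source) (hs ▸ q.source)))
    (hC : C.Homotopic ((Path.refl y).cast (hu ▸ p.target) (hu ▸ q.target)))
    (h : (B.trans (q.subpath s u)).Homotopic ((p.subpath s u).trans C)) : q.Homotopic p := by
  subst hs hu
  rw [subpath_zero_one, subpath_zero_one] at h
  have h' := ((hB.hcomp (refl _)).symm.trans h).trans ((refl _).hcomp hC)
  rw [← cast_trans, ← cast_trans] at h'
  exact (refl_trans q).symm.trans ((of_cast _ _ h').trans (trans_refl p))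

end Path

section RelSimplyConnected

variable {X : Type*} [TopologicalSpace X]

/-- Paths in `V` with common endpoints are homotopic in `X`, though not necessarily in `V`. -/
def IsRelSimplyConnected (V : Set X) : Prop :=
  ∀ ⦃a b : X⦄ (γ γ' : Path a b), range γ ⊆ V → range γ' ⊆ V → γ.Homotopic γ'

theorem IsRelSimplyConnected.mono {U V : Set X} (hV : IsRelSimplyConnected V) (hUV : U ⊆ V) :
    IsRelSimplyConnected U :=
  fun _ _ γ γ' hγ hγ' => hV γ γ' (hγ.trans hUV) (hγ'.trans hUV)

end RelSimplyConnected

theorem SemiLocallySimplyConnected.exists_isOpen_isRelSimplyConnected {X : Type}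
    [TopologicalSpace X] [LocallyPathConnectedSpace X] (hX : SemiLocallySimplyConnected X)
    (y : X) : ∃ V : Set X, IsOpen V ∧ y ∈ V ∧ IsRelSimplyConnected V := by
  obtain ⟨U, hU, hloop⟩ := hX y
  have hyU : y ∈ interior U := mem_interior_iff_mem_nhds.2 hU
  refine ⟨pathComponentIn (interior U) y, isOpen_interior.pathComponentIn y,
    mem_pathComponentIn_self hyU, fun a b γ γ' hγ hγ' => ?_⟩
  have hVU : pathComponentIn (interior U) y ⊆ U := pathComponentIn_subset.trans interior_subset
  obtain ⟨c, hc⟩ : JoinedIn (interior U) y a := hγ ⟨0, γ.source⟩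
  -- conjugating by `c` turns `γ ⬝ γ'⁻¹` into a loop at the centre `y`
  refine Path.Homotopic.of_trans_left c (Path.homotopic_iff_trans_symm_homotopic_refl.2 <|
    hloop _ ?_)
  simp only [Path.trans_range, Path.symm_range]
  have hcU : range c ⊆ U := (range_subset_iff.2 hc).trans interior_subset
  exact union_subset (union_subset hcU (hγ.trans hVU)) (union_subset hcU (hγ'.trans hVU))

theorem Path.mem_nhds_iff {X : Type*} [PseudoMetricSpace X] {x y : X} {p : Path x y}
    {S : Set (Path x y)} :
    S ∈ 𝓝 p ↔ ∃ ε > 0, ∀ q : Path x y, (∀ t, dist (q t) (p t) < ε) → q ∈ S := by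
  rw [nhds_induced, (Metric.nhds_basis_ball.comap _).mem_iff]
  refine _root_.exists_congr fun ε => and_congr_right fun hε => ?_
  simp only [subset_def, mem_preimage, mem_ball, ContinuousMap.dist_lt_iff hε]
  rfl

theorem IsCompact.exists_forall_joinedIn_ball {X : Type*} [PseudoMetricSpace X]
    [LocallyPathConnectedSpace X] {K : Set X} (hK : IsCompact K) {ρ : ℝ} (hρ : 0 < ρ) :
    ∃ r > 0, ∀ k ∈ K, ∀ z, dist z k < r → JoinedIn (ball k ρ) k z := by
  obtain ⟨r, hr, hcover⟩ := lebesgue_number_lemma_of_metric hK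
    (fun j => (isOpen_ball (x := j) (ε := ρ / 2)).pathComponentIn j)
    (fun k _ => mem_iUnion.2 ⟨k, mem_pathComponentIn_self (mem_ball_self (half_pos hρ))⟩)
  refine ⟨r, hr, fun k hk z hz => ?_⟩
  obtain ⟨j, hj⟩ := hcover k hk
  have hjk : JoinedIn (ball j (ρ / 2)) j k := hj (mem_ball_self hr)
  have hjz : JoinedIn (ball j (ρ / 2)) j z := hj hz
  refine (hjk.symm.trans hjz).mono fun w hw => ?_
  have := hjk.mem.2
  rw [mem_ball] at hw this ⊢
  linarith [dist_triangle w j k, dist_comm j k]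

theorem SemiLocallySimplyConnected.exists_forall_isRelSimplyConnected_ball {X : Type}
    [PseudoMetricSpace X] [LocallyPathConnectedSpace X] (hX : SemiLocallySimplyConnected X)
    {K : Set X} (hK : IsCompact K) : ∃ δ > 0, ∀ k ∈ K, IsRelSimplyConnected (ball k δ) := by
  choose V hVo hyV hV using hX.exists_isOpen_isRelSimplyConnected
  obtain ⟨δ, hδ, hδV⟩ := lebesgue_number_lemma_of_metric hK hVo
    fun z _ => mem_iUnion.2 ⟨z, hyV z⟩
  refine ⟨δ, hδ, fun k hk => ?_⟩
  obtain ⟨z, hz⟩ := hδV k hk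
  exact (hV z).mono hz

theorem SemiLocallySimplyConnected.setOf_homotopic_mem_nhds {X : Type} [PseudoMetricSpace X]
    [LocallyPathConnectedSpace X] (hX : SemiLocallySimplyConnected X) {x y : X}
    (p : Path x y) : {q | q.Homotopic p} ∈ 𝓝 p := by
  have hK := isCompact_range p.continuous
  obtain ⟨δ, hδ, hball⟩ := hX.exists_forall_isRelSimplyConnected_ball hK
  replace hball s : IsRelSimplyConnected (ball (p s) δ) := hball _ (mem_range_self s)
  obtain ⟨r, hr, hjoin⟩ := hK.exists_forall_joinedIn_ball (ρ := δ / 4) (by positivity)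
  obtain ⟨t, ht0, ht, ⟨n, hn⟩, hpiece⟩ := exists_monotone_Icc_subset_open_cover_unitInterval
    (c := fun s => p ⁻¹' ball (p s) (δ / 4)) (fun s => isOpen_ball.preimage p.continuous)
    fun s _ => mem_iUnion.2 ⟨s, mem_ball_self (by positivity)⟩
  refine Path.mem_nhds_iff.2 ⟨min r (δ / 4), by positivity, fun q hq => ?_⟩
  have hjoin' : ∀ k, JoinedIn (ball (p (t k)) (δ / 4)) (p (t k)) (q (t k)) := fun k =>
    hjoin _ (mem_range_self _) _ ((hq _).trans_le (min_le_left _ _))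
  let A k := (hjoin' k).somePath
  have hA : ∀ k, range (A k) ⊆ ball (p (t k)) (δ / 4) := fun k =>
    range_subset_iff.2 (hjoin' k).somePath_mem
  -- all four sides of the `k`-th square lie in a ball of radius `δ` about a point of `p`
  have square : ∀ k, ((A k).trans (q.subpath (t k) (t (k + 1)))).Homotopic
      ((p.subpath (t k) (t (k + 1))).trans (A (k + 1))) := by
    intro k
    obtain ⟨s, hs⟩ := hpiece k
    have hAs : ∀ j ∈ Icc (t k) (t (k + 1)), ball (p j) (δ / 4) ⊆ ball (p s) δ := fun j hj =>
      ball_subset_ball' (by linarith [mem_ball.1 (hs hj)])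
    have hle := ht (Nat.le_add_right k 1)
    apply hball s <;>
      simp only [Path.trans_range, Path.range_subpath_of_le _ _ _ hle, union_subset_iff]
    · refine ⟨(hA k).trans (hAs _ (left_mem_Icc.2 hle)), ?_⟩
      rintro _ ⟨τ, hτ, rfl⟩
      refine mem_ball.2 ?_
      have := (hq τ).trans_le (min_le_right _ _)
      linarith [mem_ball.1 (hs hτ), dist_triangle (q τ) (p τ) (p s)]
    · refine ⟨fun _ ⟨τ, hτ, hpτ⟩ => hpτ ▸ ball_subset_ball (by linarith) (hs hτ), ?_⟩
      exact (hA (k + 1)).trans (hAs _ (right_mem_Icc.2 hle))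
  have hend : ∀ j z (h₁ : p (t j) = z) (h₂ : q (t j) = z),
      (A j).Homotopic ((Path.refl z).cast h₁ h₂) := fun j z h₁ h₂ =>
    hball (t j) _ _ ((hA j).trans (ball_subset_ball (by linarith)))
      (by simp [Path.cast_coe, ← h₁, hδ])
  exact Path.Homotopic.of_trans_subpath ht0 (hn n le_rfl) (hend 0 x _ _) (hend n y _ _)
    (Path.Homotopic.subpath_ladder t A square n)

theorem SemiLocallySimplyConnected.isOpen_setOf_homotopic {X : Type} [PseudoMetricSpace X]
    [LocallyPathConnectedSpace X] (hX : SemiLocallySimplyConnected X) {x y : X}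
    (p : Path x y) : IsOpen {q : Path x y | q.Homotopic p} := by
  refine isOpen_iff_mem_nhds.2 fun q₀ hq₀ => ?_
  have : {q : Path x y | q.Homotopic p} = {q | q.Homotopic q₀} :=
    ext fun _ => ⟨fun h => h.trans hq₀.symm, fun h => h.trans hq₀⟩
  exact this ▸ hX.setOf_homotopic_mem_nhds q₀

section LoopsIn

variable {X : Type} [TopologicalSpace X] {x : X}

theorem Path.Homotopic.mem_loopsIn_iff {p q : Path x x} (h : p.Homotopic q)
    {G : Subgroup (FundamentalGroup X x)} : p ∈ loopsIn G ↔ q ∈ loopsIn G := by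
  rw [loopsIn, mem_ofPred_eq, mem_ofPred_eq,
    (Quotient.sound h : (⟦p⟧ : Path.Homotopic.Quotient x x) = ⟦q⟧)]

theorem mem_loopsIn_bot_iff {p : Path x x} :
    p ∈ loopsIn (⊥ : Subgroup (FundamentalGroup X x)) ↔ p.Homotopic (Path.refl x) :=
  Subgroup.mem_bot.trans Quotient.eq

theorem isOpen_loopsIn_of_forall_isOpen_setOf_homotopic
    (h : ∀ p : Path x x, IsOpen {q : Path x x | q.Homotopic p})
    (G : Subgroup (FundamentalGroup X x)) : IsOpen (loopsIn G) :=
  isOpen_iff_forall_mem_open.2 fun p hp =>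
    ⟨_, fun _ hq => (Path.Homotopic.mem_loopsIn_iff hq).2 hp, h p, Path.Homotopic.refl p⟩

theorem isOpen_setOf_homotopic_of_isOpen_loopsIn_bot {y : X}
    (h : IsOpen (loopsIn (⊥ : Subgroup (FundamentalGroup X x)))) (p : Path x y) :
    IsOpen {q : Path x y | q.Homotopic p} := by
  have : {q : Path x y | q.Homotopic p} = (·.trans p.symm) ⁻¹' loopsIn ⊥ := by
    ext q
    exact Path.homotopic_iff_trans_symm_homotopic_refl.trans mem_loopsIn_bot_iff.symm
  rw [this]
  exact h.preimage (continuous_id.path_trans continuous_const)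

end LoopsIn

theorem semiLocallySimplyConnected_of_isOpen_loopsIn_bot {X : Type} [PseudoMetricSpace X]
    (h : ∀ x : X, IsOpen (loopsIn (⊥ : Subgroup (FundamentalGroup X x)))) :
    SemiLocallySimplyConnected X := fun z => by
  obtain ⟨ε, hε, hS⟩ :=
    Path.mem_nhds_iff.1 ((h z).mem_nhds (mem_loopsIn_bot_iff.2 (Path.Homotopic.refl _)))
  exact ⟨ball z ε, ball_mem_nhds z hε,
    fun L hL => mem_loopsIn_bot_iff.1 (hS L fun t => hL (mem_range_self t))⟩

theorem slsc_iff_trivial_open_general {X : Type} [MetricSpace X]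
    [LocallyPathConnectedSpace X] :
    ((∀ x : X, IsOpen (loopsIn (⊥ : Subgroup (FundamentalGroup X x)))) ↔
      (∀ (x : X) (G : Subgroup (FundamentalGroup X x)), IsOpen (loopsIn G))) ∧
    ((∀ (x : X) (G : Subgroup (FundamentalGroup X x)), IsOpen (loopsIn G)) ↔
      SemiLocallySimplyConnected X) := by
  refine ⟨⟨fun h x => ?_, fun h x => h x ⊥⟩,
    ⟨fun h => semiLocallySimplyConnected_of_isOpen_loopsIn_bot fun x => h x ⊥, fun h x => ?_⟩⟩
  · exact isOpen_loopsIn_of_forall_isOpen_setOf_homotopic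
      (isOpen_setOf_homotopic_of_isOpen_loopsIn_bot (h x))
  · exact isOpen_loopsIn_of_forall_isOpen_setOf_homotopic h.isOpen_setOf_homotopic

/-- For a locally path-connected metric space `X`, the following are equivalent:
(1) the trivial subgroup of `π₁(X)` is open; (2) all subgroups of `π₁(X, x)` are open;
(3) `X` is semi-locally simply connected. -/
theorem slsc_iff_trivial_open {X : Type} [MetricSpace X] [PathConnectedSpace X]
    [LocallyPathConnectedSpace X] :
    ((∀ x : X, IsOpen (loopsIn (⊥ : Subgroup (FundamentalGroup X x)))) ↔
      (∀ (x : X) (G : Subgroup (FundamentalGroup X x)), IsOpen (loopsIn G))) ∧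
    ((∀ (x : X) (G : Subgroup (FundamentalGroup X x)), IsOpen (loopsIn G)) ↔
      SemiLocallySimplyConnected X) :=
  slsc_iff_trivial_open_general
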